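/- Matching characterization of D_k: call (i, j) a matched pair of a word w = w_1 w_2 ⋯ w_n over Σ_k if i < j, w_i is an opening parenthesis, w_j is a closing parenthesis, and μ_u(w_{i+1}⋯w_{j−1}) = ε. Then w ∈ D_k if and only if μ_u(w) = ε and for every matched pair (i, j) of w the types agree, i.e., w_i = ⟨_s and w_j = ⟩_s for the same s. -/

import Mathlib

/-- The alphabet `Σ_k` of `k` types of opening (`op`) and closing (`cl`) parentheses. -/
inductive Par (k : ℕ) where
  | op : Fin k → Par k
  | cl : Fin k → Par k
deriving DecidableEq

namespace Par

/-- One step of the type-unaware reduction: `μ_u(zσ)` computed from `μ_u(z)`. -/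
def muUStep {k : ℕ} (z : List (Par k)) (σ : Par k) : List (Par k) :=
  match z.getLast?, σ with
  | some (op _), cl _ => z.dropLast
  | _, _ => z ++ [σ]

/-- The type-unaware reduction `μ_u`. -/
def muU {k : ℕ} (w : List (Par k)) : List (Par k) := w.foldl muUStep []

/-- One step of the type-aware reduction: cancellation requires matching types. -/
def muAStep {k : ℕ} (z : List (Par k)) (σ : Par k) : List (Par k) :=
  match z.getLast?, σ with
  | some (op i), cl j => if i = j then z.dropLast else z ++ [σ]
  | _, _ => z ++ [σ]

/-- The type-aware reduction `μ_a`. -/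
def muA {k : ℕ} (w : List (Par k)) : List (Par k) := w.foldl muAStep []

/-- Is the symbol a closing parenthesis? -/
def isCl {k : ℕ} : Par k → Bool
  | cl _ => true
  | _ => false

/-- Is the symbol an opening parenthesis? -/
def isOp {k : ℕ} : Par k → Bool
  | op _ => true
  | _ => false

/-- `ℓ(w)`: the number of unmatched closing parentheses of `w`. -/
def ell {k : ℕ} (w : List (Par k)) : ℕ := (muU w).countP isCl

/-- `r(w)`: the number of unmatched opening parentheses of `w`. -/
def rr {k : ℕ} (w : List (Par k)) : ℕ := (muU w).countP isOp

/-- The Dyck language `D_k`: smallest set containing `ε`, closed under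
concatenation, and containing `⟨_i w ⟩_i` whenever it contains `w`. -/
inductive Dyck {k : ℕ} : List (Par k) → Prop where
  | nil : Dyck []
  | append {u v : List (Par k)} : Dyck u → Dyck v → Dyck (u ++ v)
  | wrap {w : List (Par k)} (i : Fin k) : Dyck w → Dyck (op i :: w ++ [cl i])

end Par

/-- `(i, j)` is a matched pair of `w` (0-indexed): `i < j`, `w_i` is an opening
parenthesis, `w_j` is a closing parenthesis, and `μ_u(w_{i+1}⋯w_{j−1}) = ε`. -/
def MatchedPair {k : ℕ} (w : List (Par k)) (i j : ℕ) : Prop :=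
  i < j ∧ j < w.length ∧
    (∃ s, w[i]? = some (Par.op s)) ∧ (∃ s, w[j]? = some (Par.cl s)) ∧
    Par.muU ((w.drop (i + 1)).take (j - i - 1)) = []

/-!
A nonempty word `w` with `μ_u(w) = ε` splits at the first unmatched closing parenthesis of its
tail as `w = ⟨_s u ⟩_t v` with `μ_u(u) = μ_u(v) = ε`. The outer pair is matched, so if matched
pairs agree then `s = t`, and induction on `u` and `v` gives `w ∈ D_k`. Conversely, both
constructors of `D_k` preserve `μ_u = ε` and agreement of matched pairs: a matched pair cannot
straddle the two factors of `u ++ v`, nor use exactly one of the outer parentheses of `⟨_i w ⟩_i`,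
because an unmatched closing parenthesis of a prefix is never cancelled later and so would
survive in `μ_u`. Matched pairs are handled as factorisations `x ⟨_s u ⟩_t y` rather than indices.
-/

theorem List.eq_take_append_cons_drop {α : Type*} {l : List α} {n : ℕ} {a : α}
    (h : l[n]? = some a) : l = l.take n ++ a :: l.drop (n + 1) := by
  obtain ⟨hn, rfl⟩ := List.getElem?_eq_some_iff.mp h
  rw [← List.drop_eq_getElem_cons hn, List.take_append_drop]

namespace Par

variable {k : ℕ}

section Reduction

variable {z : List (Par k)} {σ : Par k} {t : Fin k}

lemma muUStep_op (z : List (Par k)) (i : Fin k) : muUStep z (op i) = z ++ [op i] := by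
  unfold muUStep
  split <;> simp_all

lemma muUStep_cl_of_getLast?_eq {i : Fin k} (h : z.getLast? = some (op i)) (j : Fin k) :
    muUStep z (cl j) = z.dropLast := by
  simp [muUStep, h]

lemma mem_muUStep_of_mem (h : cl t ∈ z) : cl t ∈ muUStep z σ := by
  unfold muUStep
  split
  · next i _ hlast =>
    rw [← List.dropLast_append_getLast? _ hlast] at h
    simpa using h
  · exact List.mem_append_left _ h

lemma exists_getLast?_eq_op (hz : z ≠ []) (hfree : ∀ t, cl t ∉ z) :
    ∃ i, z.getLast? = some (op i) := by
  cases hlast : z.getLast hz with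
  | op i => exact ⟨i, by rw [List.getLast?_eq_some_getLast hz, hlast]⟩
  | cl t => exact absurd (hlast ▸ List.getLast_mem hz) (hfree t)

lemma muU_append (u v : List (Par k)) : muU (u ++ v) = v.foldl muUStep (muU u) :=
  List.foldl_append

lemma muU_concat (u : List (Par k)) (σ : Par k) : muU (u ++ [σ]) = muUStep (muU u) σ := by
  simp [muU]

lemma muU_append_of_muU_eq_nil {u : List (Par k)} (h : muU u = []) (v : List (Par k)) :
    muU (u ++ v) = muU v := by
  rw [muU_append, h, muU]

lemma mem_foldl_muUStep_of_mem (h : cl t ∈ z) (v : List (Par k)) :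
    cl t ∈ v.foldl muUStep z := by
  induction v generalizing z with
  | nil => exact h
  | cons σ v ih => exact ih (mem_muUStep_of_mem h)

/-- An unmatched closing parenthesis is never cancelled later on. -/
lemma mem_muU_of_prefix {u w : List (Par k)} (hp : u <+: w) (h : cl t ∈ muU u) :
    cl t ∈ muU w := by
  obtain ⟨v, rfl⟩ := hp
  rw [muU_append]
  exact mem_foldl_muUStep_of_mem h v

lemma foldl_muUStep_eq_append {v : List (Par k)} (hv : ∀ t, cl t ∉ muU v)
    (z : List (Par k)) : v.foldl muUStep z = z ++ muU v := by
  induction v using List.reverseRecOn with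
  | nil => simp [muU]
  | append_singleton v σ ih =>
    have hv' : ∀ t, cl t ∉ muU v := fun t ht =>
      hv t (mem_muU_of_prefix (List.prefix_append _ _) ht)
    rw [List.foldl_append, ih hv', muU_concat]
    cases σ with
    | op i => simp [muUStep_op]
    | cl j =>
      have hne : muU v ≠ [] := by
        rintro h0
        exact hv j (by simp [muU_concat, h0, muUStep])
      obtain ⟨i, hlast⟩ := exists_getLast?_eq_op hne hv'
      have hlast' : (z ++ muU v).getLast? = some (op i) := by
        rw [List.getLast?_append_of_ne_nil _ hne, hlast]
      simp [muUStep_cl_of_getLast?_eq hlast, muUStep_cl_of_getLast?_eq hlast',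
        List.dropLast_append_of_ne_nil hne]

lemma muU_append_eq_append {v : List (Par k)} (hv : ∀ t, cl t ∉ muU v) (u : List (Par k)) :
    muU (u ++ v) = muU u ++ muU v := by
  rw [muU_append, foldl_muUStep_eq_append hv]

lemma muU_op_cons_ne_nil {u v : List (Par k)} (hv : ∀ t, cl t ∉ muU v) (i : Fin k) :
    muU (u ++ op i :: v) ≠ [] := by
  rw [← List.singleton_append, ← List.append_assoc, muU_append_eq_append hv, muU_concat,
    muUStep_op]
  simp

lemma muU_wrap {u : List (Par k)} (h : muU u = []) (i j : Fin k) :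
    muU (op i :: u ++ [cl j]) = [] := by
  have hu : ∀ t, cl t ∉ muU u := by simp [h]
  rw [muU_concat, ← List.singleton_append, muU_append_eq_append hu, h]
  simp [muU, muUStep]

lemma exists_eq_append_cl_cons {w : List (Par k)} (h : cl t ∈ muU w) :
    ∃ u t' v, w = u ++ cl t' :: v ∧ muU u = [] := by
  induction w using List.reverseRecOn generalizing t with
  | nil => simp [muU] at h
  | append_singleton w σ ih =>
    by_cases hw : ∃ t, cl t ∈ muU w
    · obtain ⟨t, ht⟩ := hw
      obtain ⟨u, t', v, rfl, hu⟩ := ih ht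
      exact ⟨u, t', v ++ [σ], by simp, hu⟩
    simp only [not_exists] at hw
    rw [muU_concat] at h
    cases σ with
    | op i => simp [muUStep_op, hw] at h
    | cl j =>
      by_cases h0 : muU w = []
      · exact ⟨w, j, [], rfl, h0⟩
      obtain ⟨i, hlast⟩ := exists_getLast?_eq_op h0 hw
      rw [muUStep_cl_of_getLast?_eq hlast] at h
      exact absurd (List.mem_of_mem_dropLast h) (hw t)

lemma exists_eq_op_cons_append_cl_cons {w : List (Par k)} (h : muU w = []) (hw : w ≠ []) :
    ∃ s u t v, w = op s :: (u ++ cl t :: v) ∧ muU u = [] ∧ muU v = [] := by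
  obtain ⟨σ, w, rfl⟩ := List.exists_cons_of_ne_nil hw
  obtain ⟨s, rfl⟩ : ∃ s, σ = op s := by
    cases σ with
    | op s => exact ⟨s, rfl⟩
    | cl t =>
      have := mem_muU_of_prefix (t := t) (List.prefix_append [cl t] w) (by simp [muU, muUStep])
      simp [h] at this
  obtain ⟨t, ht⟩ : ∃ t, cl t ∈ muU w := by
    by_contra! hfree
    exact muU_op_cons_ne_nil hfree s (u := []) h
  obtain ⟨u, t, v, rfl, hu⟩ := exists_eq_append_cl_cons ht
  refine ⟨s, u, t, v, rfl, hu, ?_⟩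
  rw [← h, show op s :: (u ++ cl t :: v) = op s :: u ++ [cl t] ++ v by simp,
    muU_append_of_muU_eq_nil (muU_wrap hu s t)]

end Reduction

lemma muU_eq_nil_of_dyck {w : List (Par k)} (h : Dyck w) : muU w = [] := by
  induction h with
  | nil => rfl
  | append _ _ hu hv => rw [muU_append_of_muU_eq_nil hu, hv]
  | wrap i _ hw => exact muU_wrap hw i i

def MatchedPairsAgree (w : List (Par k)) : Prop :=
  ∀ x u y s t, w = x ++ op s :: (u ++ cl t :: y) → muU u = [] → s = t

lemma MatchedPairsAgree.of_infix {v w : List (Par k)} (h : MatchedPairsAgree w)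
    (hvw : v <:+: w) : MatchedPairsAgree v := by
  obtain ⟨p, q, rfl⟩ := hvw
  rintro x u y s t rfl hu
  exact h (p ++ x) u (y ++ q) s t (by simp) hu

lemma MatchedPairsAgree.append {u v : List (Par k)} (hu0 : muU u = [])
    (hu : MatchedPairsAgree u) (hv : MatchedPairsAgree v) : MatchedPairsAgree (u ++ v) := by
  intro x m y s t h hm
  have hm' : ∀ t, cl t ∉ muU m := by simp [hm]
  rcases List.append_eq_append_iff.mp h with ⟨a, rfl, hva⟩ | ⟨c, rfl, hc⟩
  · exact hv a m y s t hva hm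
  rcases c with _ | ⟨σ, c⟩
  · exact hv [] m y s t (by simpa using hc.symm) hm
  rw [List.cons_append, List.cons_eq_cons] at hc
  obtain ⟨rfl, hc⟩ := hc
  rcases List.append_eq_append_iff.mp hc with ⟨a, rfl, ha⟩ | ⟨b, rfl, hb⟩
  · rcases a with _ | ⟨τ, a⟩
    · rw [List.append_nil] at hu0
      exact absurd hu0 (muU_op_cons_ne_nil hm' s)
    obtain ⟨rfl, rfl⟩ := List.cons_eq_cons.mp ha
    exact hu x m a s t (by simp) hm
  · have hc' : ∀ t, cl t ∉ muU c := fun t ht =>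
      hm' t (mem_muU_of_prefix (List.prefix_append c b) ht)
    exact absurd hu0 (muU_op_cons_ne_nil hc' s)

lemma MatchedPairsAgree.wrap {w : List (Par k)} (hw0 : muU w = []) (hw : MatchedPairsAgree w)
    (i : Fin k) : MatchedPairsAgree (op i :: w ++ [cl i]) := by
  intro x m y s t h hm
  have hm' : ∀ t, cl t ∉ muU m := by simp [hm]
  rcases y.eq_nil_or_concat with rfl | ⟨y, τ, rfl⟩
  · simp only [← List.cons_append, ← List.append_assoc] at h
    obtain ⟨hx, hi⟩ := List.append_inj' h rfl
    obtain rfl : i = t := by simpa using hi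
    rcases x with _ | ⟨σ, x⟩
    · exact (op.inj (List.cons_eq_cons.mp hx).1).symm
    obtain ⟨-, rfl⟩ := List.cons_eq_cons.mp hx
    exact absurd hw0 (muU_op_cons_ne_nil hm' s)
  · simp only [List.concat_eq_append, ← List.cons_append, ← List.append_assoc] at h
    obtain ⟨hx, -⟩ := List.append_inj' h rfl
    rcases x with _ | ⟨σ, x⟩
    · obtain ⟨-, rfl⟩ : i = s ∧ w = m ++ cl t :: y := by simpa using hx
      have := mem_muU_of_prefix (t := t) (List.prefix_append (m ++ [cl t]) y)
        (by simp [muU_concat, hm, muUStep])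
      simp [hw0] at this
    obtain ⟨-, rfl⟩ := List.cons_eq_cons.mp hx
    exact hw x m y s t (by simp) hm

lemma matchedPairsAgree_of_dyck {w : List (Par k)} (h : Dyck w) : MatchedPairsAgree w := by
  induction h with
  | nil => intro x u y s t h; simp at h
  | append hu _ ihu ihv => exact ihu.append (muU_eq_nil_of_dyck hu) ihv
  | wrap i hw ihw => exact ihw.wrap (muU_eq_nil_of_dyck hw) i

lemma dyck_of_muU_eq_nil_of_matchedPairsAgree {w : List (Par k)} (h : muU w = [])
    (ha : MatchedPairsAgree w) : Dyck w := by
  by_cases hw : w = []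
  · exact hw ▸ Dyck.nil
  obtain ⟨s, u, t, v, rfl, hu, hv⟩ := exists_eq_op_cons_append_cl_cons h hw
  obtain rfl := ha [] u v s t rfl hu
  have hDu := dyck_of_muU_eq_nil_of_matchedPairsAgree hu
    (ha.of_infix ⟨[op s], cl s :: v, by simp⟩)
  have hDv := dyck_of_muU_eq_nil_of_matchedPairsAgree hv
    (ha.of_infix ⟨op s :: u ++ [cl s], [], by simp⟩)
  simpa using hDu.wrap s |>.append hDv
termination_by w.length
decreasing_by all_goals subst_vars; simp only [List.length_cons, List.length_append]; omega

theorem dyck_iff_muU_eq_nil_and_matchedPairsAgree (w : List (Par k)) :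
    Dyck w ↔ muU w = [] ∧ MatchedPairsAgree w :=
  ⟨fun h => ⟨muU_eq_nil_of_dyck h, matchedPairsAgree_of_dyck h⟩,
    fun h => dyck_of_muU_eq_nil_of_matchedPairsAgree h.1 h.2⟩

end Par

open Par

section MatchedPairIndices

variable {k : ℕ}

lemma getElem?_append_op_cons (x u y : List (Par k)) (s t : Fin k) :
    (x ++ op s :: (u ++ cl t :: y))[x.length]? = some (op s) := by
  simp

lemma getElem?_append_cl_cons (x u y : List (Par k)) (s t : Fin k) :
    (x ++ op s :: (u ++ cl t :: y))[x.length + u.length + 1]? = some (cl t) := by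
  rw [show x ++ op s :: (u ++ cl t :: y) = (x ++ op s :: u) ++ cl t :: y by simp,
    show x.length + u.length + 1 = (x ++ op s :: u).length by simp; omega]
  simp

lemma matchedPair_append (x u y : List (Par k)) (s t : Fin k) (hu : muU u = []) :
    MatchedPair (x ++ op s :: (u ++ cl t :: y)) x.length (x.length + u.length + 1) := by
  refine ⟨by omega, by simp; omega, ⟨s, getElem?_append_op_cons ..⟩,
    ⟨t, getElem?_append_cl_cons ..⟩, ?_⟩
  have hdrop : (x ++ op s :: (u ++ cl t :: y)).drop (x.length + 1) = u ++ cl t :: y := by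
    rw [← List.singleton_append, ← List.append_assoc]
    exact List.drop_left' (by simp)
  rwa [hdrop, show x.length + u.length + 1 - x.length - 1 = u.length by omega,
    List.take_left' rfl]

lemma MatchedPair.exists_eq_append {w : List (Par k)} {i j : ℕ} (h : MatchedPair w i j)
    {s t : Fin k} (hi : w[i]? = some (op s)) (hj : w[j]? = some (cl t)) :
    ∃ x u y, w = x ++ op s :: (u ++ cl t :: y) ∧ muU u = [] := by
  obtain ⟨hij, -, -, -, hu⟩ := h
  have hr : (w.drop (i + 1))[j - i - 1]? = some (cl t) := by
    rw [List.getElem?_drop, ← hj]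
    congr 1
    omega
  refine ⟨w.take i, _, (w.drop (i + 1)).drop (j - i - 1 + 1), ?_, hu⟩
  rw [← List.eq_take_append_cons_drop hr]
  exact List.eq_take_append_cons_drop hi

theorem forall_matchedPair_iff_matchedPairsAgree (w : List (Par k)) :
    (∀ i j, MatchedPair w i j → ∃ s, w[i]? = some (op s) ∧ w[j]? = some (cl s)) ↔
      MatchedPairsAgree w := by
  constructor
  · rintro h x u y s t rfl hu
    obtain ⟨r, hi, hj⟩ := h _ _ (matchedPair_append x u y s t hu)
    rw [getElem?_append_op_cons] at hi
    rw [getElem?_append_cl_cons] at hj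
    simp only [Option.some.injEq, op.injEq, cl.injEq] at hi hj
    exact hi.trans hj.symm
  · intro h i j hp
    obtain ⟨s, hi⟩ := hp.2.2.1
    obtain ⟨t, hj⟩ := hp.2.2.2.1
    obtain ⟨x, u, y, hw, hu⟩ := hp.exists_eq_append hi hj
    obtain rfl := h x u y s t hw hu
    exact ⟨s, hi, hj⟩

end MatchedPairIndices

/-- `w ∈ D_k` iff `μ_u(w) = ε` and every matched pair of `w` has
agreeing types. -/
theorem dyck_iff_matched_pairs_agree {k : ℕ} (w : List (Par k)) :
    Par.Dyck w ↔
      Par.muU w = [] ∧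
      ∀ i j, MatchedPair w i j →
        ∃ s, w[i]? = some (Par.op s) ∧ w[j]? = some (Par.cl s) := by
  rw [forall_matchedPair_iff_matchedPairsAgree]
  exact dyck_iff_muU_eq_nil_and_matchedPairsAgree w
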